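/- Let S be a poset and (G_i), (H_i) families of terminating games indexed by S whose ordered joins are terminating. If Γ₁(G_i) = Γ₁(H_i) for every i ∈ S, then Γ₁(S ⋈ G) = Γ₁(S ⋈ H), i.e., the Grundy set of an ordered join is determined by its shape and the Grundy sets of its components. -/

import Mathlib

universe u

/-- Combinatorial games were removed from Mathlib; the December 2024 definitions are restated. -/
inductive SetTheory.PGame : Type (u + 1)
  | mk : ∀ α β : Type u, (α → SetTheory.PGame) → (β → SetTheory.PGame) → SetTheory.PGame

/-- Nimbers: a type synonym for the ordinals, as in Mathlib of December 2024. -/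
def Nimber : Type (u + 1) := Ordinal.{u}

noncomputable section

instance Nimber.instCCLOB : ConditionallyCompleteLinearOrderBot Nimber.{u} :=
  inferInstanceAs (ConditionallyCompleteLinearOrderBot Ordinal.{u})

namespace SetTheory
namespace PGame

def LeftMoves : PGame.{u} → Type u
  | mk l _ _ _ => l

def RightMoves : PGame.{u} → Type u
  | mk _ r _ _ => r

def moveLeft : ∀ g : PGame.{u}, LeftMoves g → PGame.{u}
  | mk _ _ L _ => L

def moveRight : ∀ g : PGame.{u}, RightMoves g → PGame.{u}
  | mk _ _ _ R => R

instance : Zero PGame.{u} := ⟨⟨PEmpty, PEmpty, PEmpty.elim, PEmpty.elim⟩⟩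

/-- The pair `(x ≤ y, x ⧏ y)`, defined by simultaneous recursion. -/
def leLf (x : PGame.{u}) : PGame.{u} → Prop × Prop :=
  PGame.rec (motive := fun _ => PGame.{u} → Prop × Prop)
    (fun _ _ _ _ ihL ihR => fun y =>
      PGame.rec (motive := fun _ => Prop × Prop)
        (fun yl yr yL yR jhL jhR =>
          ((∀ i, (ihL i (mk yl yr yL yR)).2) ∧ ∀ j, (jhR j).2,
           (∃ j, (jhL j).1) ∨ ∃ i, (ihR i (mk yl yr yL yR)).1)) y) x

def le (x y : PGame.{u}) : Prop := (leLf x y).1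

def equiv (x y : PGame.{u}) : Prop := le x y ∧ le y x

def neg : PGame.{u} → PGame.{u}
  | mk l r L R => mk r l (fun i => neg (R i)) (fun i => neg (L i))

def ImpartialAux : PGame.{u} → Prop
  | mk l r L R => equiv (mk l r L R) (neg (mk l r L R)) ∧ (∀ i, ImpartialAux (L i)) ∧
      ∀ j, ImpartialAux (R j)

class Impartial (G : PGame.{u}) : Prop where
  out : ImpartialAux G

def grundyValue : PGame.{u} → Nimber.{u}
  | mk _ _ L _ => sInf (Set.range fun i => grundyValue (L i))ᶜ

end PGame
end SetTheory

end

open SetTheory PGame Nimber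

noncomputable section
open Classical in
/-- The state resulting from a (Left) move in component `i₀` of an ordered join:
all components strictly above `i₀` are replaced by the empty game `0`. -/
def ojNextL {S : Type} [PartialOrder S] (x : S → PGame) (i₀ : S) (j : (x i₀).LeftMoves) :
    S → PGame :=
  fun i => if i = i₀ then (x i₀).moveLeft j else if i₀ < i then 0 else x i

open Classical in
def ojNextR {S : Type} [PartialOrder S] (x : S → PGame) (i₀ : S) (j : (x i₀).RightMoves) :
    S → PGame :=
  fun i => if i = i₀ then (x i₀).moveRight j else if i₀ < i then 0 else x i

/-- The move relation of the ordered join: `OJRel y x` iff `y` results from `x` by a single move. -/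
def OJRel {S : Type} [PartialOrder S] (y x : S → PGame) : Prop :=
  (∃ i₀ j, y = ojNextL x i₀ j) ∨ (∃ i₀ j, y = ojNextR x i₀ j)

theorem ojrel_L {S : Type} [PartialOrder S] (x : S → PGame) (i₀ : S) (j : (x i₀).LeftMoves) :
    OJRel (ojNextL x i₀ j) x := Or.inl ⟨i₀, j, rfl⟩

theorem ojrel_R {S : Type} [PartialOrder S] (x : S → PGame) (i₀ : S) (j : (x i₀).RightMoves) :
    OJRel (ojNextR x i₀ j) x := Or.inr ⟨i₀, j, rfl⟩

/-- The ordered join of a family of games, as a game, given a termination certificate. -/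
def ojoinAcc {S : Type} [PartialOrder S] : ∀ x : S → PGame, Acc OJRel x → PGame := fun x h =>
  Acc.rec (motive := fun x _ => PGame)
    (fun x _ ih =>
      PGame.mk (Σ i₀ : S, (x i₀).LeftMoves) (Σ i₀ : S, (x i₀).RightMoves)
        (fun p => ih _ (ojrel_L x p.1 p.2))
        (fun p => ih _ (ojrel_R x p.1 p.2))) h

open Classical in
/-- The ordered join `S ⋈ G` of a family of games `G` over the poset `S`.
(Defined as `0` in the degenerate non-terminating case.) -/
def ojoin {S : Type} [PartialOrder S] (x : S → PGame) : PGame :=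
  if h : Acc OJRel x then ojoinAcc x h else 0

/-- The Grundy set `Γ₁(G)`: the set of Grundy numbers of the options of `G`. -/
def grundySet (G : PGame) : Set Nimber :=
  Set.range fun i => grundyValue (G.moveLeft i)
end

/-! An option of `S ⋈ x` that moves in component `i₀` can be answered in `S ⋈ y` by a move at
`i₀` of the same Grundy value. Afterwards the two positions need no longer have equal Grundy sets
at `i₀`, only equal Grundy values, but every component above `i₀` has been emptied. So one proves
`Γ₀(S ⋈ x) = Γ₀(S ⋈ y)` by induction on the pair of positions, under the invariant that every
component `i` satisfies either `Γ₁(x i) = Γ₁(y i)`, or `Γ₀(x i) = Γ₀(y i)` with all components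
above `i` having no options (`GrundyAgree`). A move of `x` at `i₀` is answered at `i₀` in `y` if
the Grundy value it reaches lies in `Γ₁(y i₀)`. Otherwise the invariant at `i₀` is of the second
kind and the move raised the Grundy value above `Γ₀(y i₀)`, so `x` can move back down to exactly
`Γ₀(y i₀)` in the same component; this restores the invariant with `y` itself. -/

instance : WellFoundedLT Nimber.{u} := inferInstanceAs (WellFoundedLT Ordinal.{u})

instance : NoMaxOrder Nimber.{u} := inferInstanceAs (NoMaxOrder Ordinal.{u})

namespace SetTheory.PGame

theorem grundyValue_eq_sInf_compl_grundySet (G : PGame) :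
    grundyValue G = sInf (grundySet G)ᶜ := by
  cases G
  rfl

theorem grundyValue_notMem_grundySet (G : PGame.{u}) : grundyValue G ∉ grundySet G := by
  have hbdd : BddAbove (grundySet G) := @Ordinal.bddAbove_of_small _ (small_range _)
  rw [grundyValue_eq_sInf_compl_grundySet]
  exact csInf_mem (Set.nonempty_compl.2 fun h => not_bddAbove_univ (h ▸ hbdd))

theorem mem_grundySet_of_lt {G : PGame} {v : Nimber} (h : v < grundyValue G) :
    v ∈ grundySet G := by
  rw [grundyValue_eq_sInf_compl_grundySet] at h
  simpa using notMem_of_lt_csInf h (OrderBot.bddBelow _)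

theorem grundyValue_eq_of_notMem {G H : PGame} (hG : grundyValue H ∉ grundySet G)
    (hH : grundyValue G ∉ grundySet H) : grundyValue G = grundyValue H := by
  rcases lt_trichotomy (grundyValue G) (grundyValue H) with hlt | heq | hgt
  · exact absurd (mem_grundySet_of_lt hlt) hH
  · exact heq
  · exact absurd (mem_grundySet_of_lt hgt) hG

theorem grundySet_zero : grundySet 0 = ∅ :=
  Set.range_eq_empty_iff.mpr (inferInstanceAs (IsEmpty PEmpty))

end SetTheory.PGame

section OrderedJoin

variable {S : Type} [PartialOrder S]

theorem ojNextL_self (x : S → PGame) (i₀ : S) (j : (x i₀).LeftMoves) :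
    ojNextL x i₀ j i₀ = (x i₀).moveLeft j :=
  if_pos rfl

theorem ojNextL_of_lt (x : S → PGame) {i₀ i : S} (j : (x i₀).LeftMoves) (h : i₀ < i) :
    ojNextL x i₀ j i = 0 := by
  rw [ojNextL, if_neg h.ne', if_pos h]

theorem ojNextL_of_ne_of_not_lt (x : S → PGame) {i₀ i : S} (j : (x i₀).LeftMoves)
    (hne : i ≠ i₀) (hlt : ¬i₀ < i) : ojNextL x i₀ j i = x i := by
  rw [ojNextL, if_neg hne, if_neg hlt]

theorem grundySet_ojNextL_of_lt (x : S → PGame) {i₀ i : S} (j : (x i₀).LeftMoves)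
    (h : i₀ < i) : grundySet (ojNextL x i₀ j i) = ∅ := by
  rw [ojNextL_of_lt x j h, grundySet_zero]

theorem grundySet_ojoin {x : S → PGame} (hx : Acc OJRel x) :
    grundySet (ojoin x) =
      Set.range fun p : Σ i₀, (x i₀).LeftMoves => grundyValue (ojoin (ojNextL x p.1 p.2)) := by
  rw [ojoin, dif_pos hx]
  cases hx with
  | intro _ hacc =>
    refine congrArg Set.range (funext fun p => ?_)
    rw [ojoin, dif_pos (hacc _ (ojrel_L x p.1 p.2))]
    rfl

theorem grundyValue_ojoin_ojNextL_ne {x : S → PGame} (hx : Acc OJRel x) (i₀ : S)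
    (j : (x i₀).LeftMoves) : grundyValue (ojoin (ojNextL x i₀ j)) ≠ grundyValue (ojoin x) :=
  fun h => grundyValue_notMem_grundySet (ojoin x) (grundySet_ojoin hx ▸ ⟨⟨i₀, j⟩, h⟩)

def GrundyAgree (x y : S → PGame) : Prop :=
  ∀ i, grundySet (x i) = grundySet (y i) ∨
    grundyValue (x i) = grundyValue (y i) ∧
      ∀ j, i < j → grundySet (x j) = ∅ ∧ grundySet (y j) = ∅

theorem GrundyAgree.of_grundySet_eq {x y : S → PGame}
    (h : ∀ i, grundySet (x i) = grundySet (y i)) : GrundyAgree x y :=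
  fun i => Or.inl (h i)

theorem GrundyAgree.symm {x y : S → PGame} (h : GrundyAgree x y) : GrundyAgree y x := fun i =>
  (h i).imp Eq.symm fun ⟨hv, hj⟩ => ⟨hv.symm, fun j hij => (hj j hij).symm⟩

theorem GrundyAgree.of_update {x y x' y' : S → PGame} {i₀ : S} (h : GrundyAgree x y)
    (hmoved : (grundySet (x i₀)).Nonempty)
    (hx' : ∀ i, i ≠ i₀ → ¬i₀ < i → x' i = x i) (hy' : ∀ i, i ≠ i₀ → ¬i₀ < i → y' i = y i)
    (hx'_gt : ∀ i, i₀ < i → grundySet (x' i) = ∅) (hy'_gt : ∀ i, i₀ < i → grundySet (y' i) = ∅)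
    (h₀ : grundyValue (x' i₀) = grundyValue (y' i₀)) : GrundyAgree x' y' := by
  intro i
  by_cases hi : i = i₀
  · subst hi
    exact Or.inr ⟨h₀, fun j hj => ⟨hx'_gt j hj, hy'_gt j hj⟩⟩
  by_cases hlt : i₀ < i
  · exact Or.inl ((hx'_gt i hlt).trans (hy'_gt i hlt).symm)
  rw [hx' i hi hlt, hy' i hi hlt]
  refine (h i).imp id fun ⟨hv, hempty⟩ => ⟨hv, fun j hij => ?_⟩
  by_cases hj : j = i₀
  · subst hj
    exact absurd (hempty j hij).1 hmoved.ne_empty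
  by_cases hlt' : i₀ < j
  · exact ⟨hx'_gt j hlt', hy'_gt j hlt'⟩
  rw [hx' j hj hlt', hy' j hj hlt']
  exact hempty j hij

theorem GrundyAgree.ojNextL {x y : S → PGame} (h : GrundyAgree x y) {i₀ : S}
    (j : (x i₀).LeftMoves) (k : (y i₀).LeftMoves)
    (hjk : grundyValue ((x i₀).moveLeft j) = grundyValue ((y i₀).moveLeft k)) :
    GrundyAgree (ojNextL x i₀ j) (ojNextL y i₀ k) :=
  h.of_update ⟨_, j, rfl⟩ (fun _ => ojNextL_of_ne_of_not_lt x j)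
    (fun _ => ojNextL_of_ne_of_not_lt y k) (fun _ => grundySet_ojNextL_of_lt x j)
    (fun _ => grundySet_ojNextL_of_lt y k) (by rw [ojNextL_self, ojNextL_self, hjk])

/-- The inductive step of `grundyValue_ojoin_eq_of_grundyAgree`, for the options of `S ⋈ x`. -/
theorem grundyValue_ojoin_ojNextL_ne_of_grundyAgree {x y : S → PGame} (hx : Acc OJRel x)
    (hy : Acc OJRel y) (h : GrundyAgree x y)
    (IH : ∀ x' y', Relation.TransGen OJRel x' x → Relation.ReflGen OJRel y' y →
      GrundyAgree x' y' → grundyValue (ojoin x') = grundyValue (ojoin y'))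
    (i₀ : S) (j : (x i₀).LeftMoves) :
    grundyValue (ojoin (ojNextL x i₀ j)) ≠ grundyValue (ojoin y) := by
  set x' := ojNextL x i₀ j
  set g := grundyValue ((x i₀).moveLeft j)
  have hx'₀ : x' i₀ = (x i₀).moveLeft j := ojNextL_self x i₀ j
  have hgx : g ∈ grundySet (x i₀) := ⟨j, rfl⟩
  by_cases hgy : g ∈ grundySet (y i₀)
  · obtain ⟨k, hk : grundyValue _ = g⟩ := hgy
    rw [IH _ _ (.single (ojrel_L x i₀ j)) (.single (ojrel_L y i₀ k)) (h.ojNextL j k hk.symm)]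
    exact grundyValue_ojoin_ojNextL_ne hy i₀ k
  obtain ⟨hv, hempty⟩ := (h i₀).resolve_left fun hset => hgy (hset ▸ hgx)
  have hlt : grundyValue (y i₀) < grundyValue (x' i₀) := by
    rw [hx'₀]
    refine lt_of_le_of_ne (not_lt.mp fun hlt => hgy (mem_grundySet_of_lt hlt)) fun heq => ?_
    exact grundyValue_notMem_grundySet (x i₀) (hv ▸ heq ▸ hgx)
  obtain ⟨j₂, hj₂ : grundyValue _ = _⟩ := mem_grundySet_of_lt hlt
  have hagree : GrundyAgree (ojNextL x' i₀ j₂) y :=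
    h.of_update ⟨g, hgx⟩
      (fun i hi hlt => (ojNextL_of_ne_of_not_lt x' j₂ hi hlt).trans
        (ojNextL_of_ne_of_not_lt x j hi hlt))
      (fun _ _ _ => rfl) (fun _ => grundySet_ojNextL_of_lt x' j₂) (fun i hi => (hempty i hi).2)
      (by rw [ojNextL_self, hj₂])
  rw [← IH _ _ (.head (ojrel_L x' i₀ j₂) (.single (ojrel_L x i₀ j))) .refl hagree]
  exact (grundyValue_ojoin_ojNextL_ne (hx.inv (ojrel_L x i₀ j)) i₀ j₂).symm

theorem grundyValue_ojoin_eq_of_grundyAgree {x y : S → PGame} (hx : Acc OJRel x)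
    (hy : Acc OJRel y) (h : GrundyAgree x y) :
    grundyValue (ojoin x) = grundyValue (ojoin y) := by
  have acc_of_transGen {z z' : S → PGame} (hz : Acc OJRel z) (h : Relation.TransGen OJRel z' z) :
      Acc OJRel z' := acc_transGen_iff.mp (hz.transGen.inv h)
  induction hx.transGen generalizing y with
  | intro x _ IHx =>
  induction hy.transGen with
  | intro y _ IHy =>
  refine grundyValue_eq_of_notMem ?_ ?_
  · rw [grundySet_ojoin hx]
    rintro ⟨⟨i₀, j⟩, hj⟩
    refine grundyValue_ojoin_ojNextL_ne_of_grundyAgree hx hy h ?_ i₀ j hj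
    rintro x' y' hx' (_ | hy') h'
    · exact IHx x' hx' (acc_of_transGen hx hx') hy h'
    · exact IHx x' hx' (acc_of_transGen hx hx') (acc_of_transGen hy (.single hy')) h'
  · rw [grundySet_ojoin hy]
    rintro ⟨⟨i₀, k⟩, hk⟩
    refine grundyValue_ojoin_ojNextL_ne_of_grundyAgree hy hx h.symm ?_ i₀ k hk
    rintro y' x' hy' (_ | hx') h'
    · exact (IHy y' hy' (acc_of_transGen hy hy') h'.symm).symm
    · exact (IHx x' (.single hx') (acc_of_transGen hx (.single hx'))
        (acc_of_transGen hy hy') h'.symm).symm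

theorem grundySet_ojoin_subset {x y : S → PGame} (hx : Acc OJRel x) (hy : Acc OJRel y)
    (h : ∀ i, grundySet (x i) = grundySet (y i)) : grundySet (ojoin x) ⊆ grundySet (ojoin y) := by
  rw [grundySet_ojoin hx, grundySet_ojoin hy]
  rintro _ ⟨⟨i₀, j⟩, rfl⟩
  obtain ⟨k, hk : grundyValue _ = _⟩ : grundyValue ((x i₀).moveLeft j) ∈ grundySet (y i₀) :=
    h i₀ ▸ ⟨j, rfl⟩
  have hagree := (GrundyAgree.of_grundySet_eq h).ojNextL j k hk.symm
  exact ⟨⟨i₀, k⟩, grundyValue_ojoin_eq_of_grundyAgree (hy.inv (ojrel_L y i₀ k))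
    (hx.inv (ojrel_L x i₀ j)) hagree.symm⟩

end OrderedJoin

theorem ojoin_general_substitution_general {S : Type} [PartialOrder S] (G H : S → PGame)
    (hG : Acc OJRel G) (hH : Acc OJRel H)
    (h1 : ∀ i, grundySet (G i) = grundySet (H i)) :
    grundySet (ojoin G) = grundySet (ojoin H) :=
  (grundySet_ojoin_subset hG hH h1).antisymm (grundySet_ojoin_subset hH hG fun i => (h1 i).symm)

/-- general substitution: for terminating ordered joins in the same shape `S`,
if `Γ₁(G i) = Γ₁(H i)` for all `i ∈ S` then `Γ₁(S ⋈ G) = Γ₁(S ⋈ H)`. -/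
theorem ojoin_general_substitution {S : Type} [PartialOrder S] (G H : S → PGame)
    (hGI : ∀ i, (G i).Impartial) (hHI : ∀ i, (H i).Impartial)
    (hG : Acc OJRel G) (hH : Acc OJRel H)
    (h1 : ∀ i, grundySet (G i) = grundySet (H i)) :
    grundySet (ojoin G) = grundySet (ojoin H) :=
  ojoin_general_substitution_general G H hG hH h1
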